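/- (Donsker–Varadhan variational formula) For a probability measure P on ℝ^n and any y ∈ ℝ^n with log ∫ e^{⟨y,z⟩} dP(z) finite, one has log ∫ e^{⟨y,z⟩} dP(z) = sup_Q { ∫ ⟨y,z⟩ dQ(z) − D(Q‖P) }, where the supremum is over probability measures Q absolutely continuous with respect to P with finite relative entropy. -/

import Mathlib

/-!
Upper bound (Gibbs): for `Q ≪ P`, `∫ f dQ - D(Q‖P) = log ∫ e^f dP - D(Q‖P_f)` where
`P_f = e^f P / ∫ e^f dP` is the tilted measure, and `D(Q‖P_f) ≥ 0`.
Lower bound: the supremum would be attained at `Q = P_f`, but `f` need not be `P_f`-integrable.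
Tilting instead by the truncation `g = min f k` (bounded above) gives an admissible `Q` with value
`∫ (f - g) dP_g + log ∫ e^g dP ≥ log ∫ e^g dP`, and `∫ e^{min f k} dP → ∫ e^f dP` by monotone
convergence.
-/

open MeasureTheory RealInnerProductSpace

/-- Real-valued Kullback–Leibler divergence `D(Q‖P) = ∫ log (dQ/dP) dQ`. -/
noncomputable def klDivR {α : Type*} [MeasurableSpace α] (μ ν : Measure α) : ℝ :=
  ∫ x, Real.log ((μ.rnDeriv ν x).toReal) ∂μ

open Real Filter Topology InformationTheory

lemma abs_mul_exp_le_of_le {x c : ℝ} (hxc : x ≤ c) : |x * exp x| ≤ exp (|c| + c) := by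
  have habs : |x| ≤ exp |x| := by linarith [add_one_le_exp |x|]
  calc |x * exp x| = |x| * exp x := by rw [abs_mul, abs_of_pos (exp_pos x)]
    _ ≤ exp |x| * exp x := by gcongr
    _ = exp (|x| + x) := (exp_add _ _).symm
    _ ≤ exp (|c| + c) := exp_le_exp.mpr <| by
      cases abs_cases x <;> cases abs_cases c <;> linarith

variable {α : Type*} [MeasurableSpace α] {P Q : Measure α} {f g : α → ℝ}

lemma integral_sub_integral_llr_le_log_integral_exp [IsProbabilityMeasure P]
    [IsProbabilityMeasure Q] (hQP : Q ≪ P) (hfQ : Integrable f Q) (hllr : Integrable (llr Q P) Q)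
    (hf : Integrable (fun x => exp (f x)) P) :
    ∫ x, f x ∂Q - ∫ x, llr Q P x ∂Q ≤ log (∫ x, exp (f x) ∂P) := by
  have : IsProbabilityMeasure (P.tilted f) := isProbabilityMeasure_tilted hf
  have hgibbs := integral_llr_add_sub_measure_univ_nonneg
    (hQP.trans (absolutelyContinuous_tilted hf)) (integrable_llr_tilted_right hQP hfQ hllr hf)
  rw [integral_llr_tilted_right hQP hfQ hf hllr] at hgibbs
  simp only [probReal_univ] at hgibbs
  linarith

lemma llr_tilted_self_ae_eq [SigmaFinite P] (hg : Integrable (fun x => exp (g x)) P) :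
    llr (P.tilted g) P =ᵐ[P.tilted g] fun x => g x - log (∫ x, exp (g x) ∂P) :=
  (tilted_absolutelyContinuous P g).ae_le (log_rnDeriv_tilted_left_self hg)

lemma integrable_llr_tilted_self [SigmaFinite P] (hg : Integrable (fun x => exp (g x)) P)
    (hgQ : Integrable g (P.tilted g)) : Integrable (llr (P.tilted g) P) (P.tilted g) :=
  (integrable_congr (llr_tilted_self_ae_eq hg)).mpr (hgQ.sub (integrable_const _))

lemma integral_llr_tilted_self [IsProbabilityMeasure P] (hg : Integrable (fun x => exp (g x)) P)
    (hgQ : Integrable g (P.tilted g)) :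
    ∫ x, llr (P.tilted g) P x ∂(P.tilted g) =
      ∫ x, g x ∂(P.tilted g) - log (∫ x, exp (g x) ∂P) := by
  have : IsProbabilityMeasure (P.tilted g) := isProbabilityMeasure_tilted hg
  rw [integral_congr_ae (llr_tilted_self_ae_eq hg), integral_sub hgQ (integrable_const _),
    integral_const, probReal_univ, one_smul]

lemma integrable_exp_of_le [IsFiniteMeasure P] {c : ℝ} (hg : Measurable g) (hgc : ∀ x, g x ≤ c) :
    Integrable (fun x => exp (g x)) P :=
  .of_bound (by fun_prop) (exp c) <| .of_forall fun x => by
    rw [norm_of_nonneg (exp_pos _).le]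
    exact exp_le_exp.mpr (hgc x)

lemma integrable_tilted_self_of_le [IsFiniteMeasure P] {c : ℝ} (hg : Measurable g)
    (hgc : ∀ x, g x ≤ c) : Integrable g (P.tilted g) := by
  rw [integrable_tilted_iff (integrable_exp_of_le hg hgc)]
  refine .of_bound (by fun_prop) (exp (|c| + c)) <| .of_forall fun x => ?_
  rw [smul_eq_mul, mul_comm, Real.norm_eq_abs]
  exact abs_mul_exp_le_of_le (hgc x)

lemma integrable_tilted_of_le (hf : Measurable f) (hg : Measurable g) (hgf : g ≤ f)
    (hfP : Integrable (fun x => exp (f x)) P) (hgQ : Integrable g (P.tilted g)) :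
    Integrable f (P.tilted g) := by
  have hgP : Integrable (fun x => exp (g x)) P :=
    hfP.mono (by fun_prop) <| .of_forall fun x => by
      simp only [norm_of_nonneg (exp_pos _).le]
      exact exp_le_exp.mpr (hgf x)
  -- `f - g ≤ exp (f - g)` makes `exp g * (f - g)` dominated by `exp f`.
  have hdiff : Integrable (f - g) (P.tilted g) := by
    rw [integrable_tilted_iff hgP]
    refine hfP.mono (by fun_prop) <| .of_forall fun x => ?_
    have hle : f x - g x ≤ exp (f x - g x) := by linarith [add_one_le_exp (f x - g x)]
    have hnonneg : 0 ≤ f x - g x := sub_nonneg.mpr (hgf x)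
    rw [smul_eq_mul, Pi.sub_apply, norm_of_nonneg (by positivity),
      norm_of_nonneg (exp_pos _).le]
    calc exp (g x) * (f x - g x) ≤ exp (g x) * exp (f x - g x) := by gcongr
      _ = exp (f x) := by rw [← exp_add, add_sub_cancel]
  simpa using hgQ.add hdiff

lemma tendsto_integral_exp_min_atTop [IsFiniteMeasure P] (hf : Measurable f)
    (hfP : Integrable (fun x => exp (f x)) P) :
    Tendsto (fun k : ℕ => ∫ x, exp (min (f x) k) ∂P) atTop (𝓝 (∫ x, exp (f x) ∂P)) := by
  refine integral_tendsto_of_tendsto_of_monotone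
    (fun k => integrable_exp_of_le (hf.min measurable_const) fun x => min_le_right _ (k : ℝ))
    hfP (.of_forall fun x => ?_) (.of_forall fun x => ?_)
  · exact fun k l hkl => exp_le_exp.mpr (min_le_min_left _ (Nat.cast_le.mpr hkl))
  · refine tendsto_const_nhds.congr' ?_
    obtain ⟨N, hN⟩ := exists_nat_ge (f x)
    filter_upwards [eventually_ge_atTop N] with k hk
    rw [min_eq_left (hN.trans (Nat.cast_le.mpr hk))]

theorem log_integral_exp_eq_sSup [IsProbabilityMeasure P] (hf : Measurable f)
    (hfP : Integrable (fun x => exp (f x)) P) :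
    log (∫ x, exp (f x) ∂P) = sSup {r : ℝ | ∃ Q : Measure α, IsProbabilityMeasure Q ∧ Q ≪ P ∧
      Integrable f Q ∧ Integrable (llr Q P) Q ∧ r = ∫ x, f x ∂Q - klDivR Q P} := by
  set S := {r : ℝ | ∃ Q : Measure α, IsProbabilityMeasure Q ∧ Q ≪ P ∧
      Integrable f Q ∧ Integrable (llr Q P) Q ∧ r = ∫ x, f x ∂Q - klDivR Q P}
  have hupper : ∀ r ∈ S, r ≤ log (∫ x, exp (f x) ∂P) := by
    rintro r ⟨Q, hQ, hQP, hfQ, hllr, rfl⟩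
    exact integral_sub_integral_llr_le_log_integral_exp hQP hfQ hllr hfP
  have htrunc : ∀ k : ℕ, ∃ r ∈ S, log (∫ x, exp (min (f x) k) ∂P) ≤ r := by
    intro k
    have hg : Measurable fun x => min (f x) (k : ℝ) := hf.min measurable_const
    have hgP := integrable_exp_of_le (P := P) hg (fun x => min_le_right _ _)
    have hgQ := integrable_tilted_self_of_le (P := P) hg (fun x => min_le_right _ _)
    have hfQ := integrable_tilted_of_le hf hg (fun x => min_le_left _ _) hfP hgQ
    refine ⟨_, ⟨_, isProbabilityMeasure_tilted hgP, tilted_absolutelyContinuous P _, hfQ,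
      integrable_llr_tilted_self hgP hgQ, rfl⟩, ?_⟩
    rw [klDivR, ← llr_def, integral_llr_tilted_self hgP hgQ]
    linarith [integral_mono hgQ hfQ fun x => min_le_left (f x) (k : ℝ)]
  obtain ⟨r₀, hr₀, -⟩ := htrunc 0
  refine le_antisymm ?_ (csSup_le ⟨r₀, hr₀⟩ hupper)
  refine le_of_tendsto ((continuousAt_log (integral_exp_pos hfP).ne').tendsto.comp
    (tendsto_integral_exp_min_atTop hf hfP)) (.of_forall fun k => ?_)
  obtain ⟨r, hr, hle⟩ := htrunc k
  exact hle.trans (le_csSup ⟨_, hupper⟩ hr)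

/-- Donsker–Varadhan variational formula:
`log ∫ e^{⟪y,z⟫} dP = sup_Q { ∫ ⟪y,z⟫ dQ − D(Q‖P) }`, the supremum over probability
measures `Q ≪ P` with finite relative entropy (and `⟪y,·⟫` integrable). -/
theorem donsker_varadhan {n : ℕ} (P : Measure (EuclideanSpace ℝ (Fin n)))
    [IsProbabilityMeasure P] (y : EuclideanSpace ℝ (Fin n))
    (hint : Integrable (fun z => Real.exp ⟪y, z⟫) P) :
    Real.log (∫ z, Real.exp ⟪y, z⟫ ∂P) =
      sSup {r : ℝ | ∃ Q : Measure (EuclideanSpace ℝ (Fin n)),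
        IsProbabilityMeasure Q ∧ Q ≪ P ∧
        Integrable (fun z => ⟪y, z⟫) Q ∧
        Integrable (fun z => Real.log ((Q.rnDeriv P z).toReal)) Q ∧
        r = (∫ z, ⟪y, z⟫ ∂Q) - klDivR Q P} :=
  log_integral_exp_eq_sSup (by fun_prop) hint
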